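/- (Regret bound of Generalized FTPL with uniform perturbations) Suppose Γ is (κ,δ)-admissible with κ ≥ 1 and 0 < δ ≤ 1, let ε ≥ 0, set η = √(δ / ((1+2ε)Tκ)), let α = (α_1,…,α_N) have independent coordinates each uniformly distributed on [0, 1/η], and suppose that for every α the sequence x_1(α),…,x_{T+1}(α) is an ε-approximate Generalized-FTPL trajectory for α, with each map α ↦ x_t(α) measurable. Then E[ max_{x∈X} Σ_{t=1}^T f(x, y_t) − Σ_{t=1}^T f(x_t(α), y_t) ] ≤ 3N√((1+2ε)Tκ/δ) + εT. -/

import Mathlib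

/-!
Fix all coordinates of the perturbation but one, `a = α j`. As a function of `a`, the
perturbed leader follows the upper envelope of the lines `a ↦ b v + a * v`, one for each value
`v` of column `j` of `Γ`, where `b v` is the best cumulative payoff among the actions with
`Γ x j = v`. A change of the value in column `j` from round `t` to `t + 1` forces the current
leader `v` to be `ε`-optimal while a line of larger (or smaller) slope is within `1 + ε`; since
slopes differ by at least `δ`, such abscissae form a set of diameter at most `(1 + 2ε) / δ`.
There are at most `2 (κ - 1)` such sets, so by Fubini each round switches action with
probability at most `N η 2 (κ - 1) (1 + 2ε) / δ`. Together with the be-the-leader inequality,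
which costs the range `N / η` of the perturbation and `ε` per round, and the trivial bound `T`,
the choice of `η` gives the claim.
-/

open Finset MeasureTheory
open scoped ENNReal

lemma measurable_comp_of_measurableSet_fiber {Ω X β : Type*} [MeasurableSpace Ω]
    [MeasurableSpace β] [Countable X] {φ : Ω → X} (hφ : ∀ x, MeasurableSet {ω | φ ω = x})
    (h : X → β) : Measurable fun ω => h (φ ω) := by
  intro s _
  have : (fun ω => h (φ ω)) ⁻¹' s = ⋃ x ∈ h ⁻¹' s, {ω | φ ω = x} := by ext; simp
  rw [this]
  exact .biUnion (Set.to_countable _) fun x _ => hφ x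

lemma integrable_comp_of_measurableSet_fiber {Ω X : Type*} [MeasurableSpace Ω] [Finite X]
    {μ : Measure Ω} [IsFiniteMeasure μ] {φ : Ω → X} (hφ : ∀ x, MeasurableSet {ω | φ ω = x})
    (h : X → ℝ) : Integrable (fun ω => h (φ ω)) μ := by
  obtain ⟨C, hC⟩ := (Set.finite_range fun x => ‖h x‖).bddAbove
  exact .of_bound (measurable_comp_of_measurableSet_fiber hφ h).aestronglyMeasurable C
    (.of_forall fun ω => hC ⟨φ ω, rfl⟩)

lemma pi_apply_le_of_update_preimage_le {ι : Type*} [Fintype ι] [DecidableEq ι] {Ω : ι → Type*}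
    [∀ i, MeasurableSpace (Ω i)] (μ : ∀ i, Measure (Ω i)) [∀ i, IsProbabilityMeasure (μ i)]
    (i : ι) {E : Set (∀ i, Ω i)} (hE : MeasurableSet E) {C : ℝ≥0∞}
    (h : ∀ x, μ i (Function.update x i ⁻¹' E) ≤ C) : Measure.pi μ E ≤ C := by
  have key := lintegral_le_of_lmarginal_le (μ := μ) {i} (measurable_one.indicator hE)
    (measurable_const (a := C)) fun x => by
      rw [lmarginal_singleton, lmarginal_singleton, lintegral_const, measure_univ, mul_one]
      exact (lintegral_indicator_one (hE.preimage (measurable_update x))).trans_le (h x)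
  simpa [lintegral_indicator_one hE] using key

lemma isProbabilityMeasure_smul_restrict_Icc {η : ℝ} (hη : 0 < η) :
    IsProbabilityMeasure (ENNReal.ofReal η • volume.restrict (Set.Icc (0 : ℝ) (1 / η))) := by
  constructor
  rw [Measure.smul_apply, Measure.restrict_apply_univ, Real.volume_Icc, smul_eq_mul,
    ← ENNReal.ofReal_mul hη.le, sub_zero, mul_one_div_cancel hη.ne', ENNReal.ofReal_one]

lemma sum_update_mul_eq {ι : Type*} [Fintype ι] [DecidableEq ι] (g w : ι → ℝ) (j : ι) (a : ℝ) :
    ∑ i, Function.update g j a i * w i = ∑ i ∈ univ.erase j, g i * w i + a * w j := by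
  rw [← sum_erase_add _ _ (mem_univ j), Function.update_self]
  congr 1
  exact sum_congr rfl fun i hi => by rw [Function.update_of_ne (ne_of_mem_erase hi)]

lemma sum_mul_mem_Icc {ι : Type*} [Fintype ι] {α w : ι → ℝ} {M : ℝ}
    (hα : ∀ i, α i ∈ Set.Icc 0 M) (hw : ∀ i, w i ∈ Set.Icc 0 1) :
    ∑ i, α i * w i ∈ Set.Icc 0 (Fintype.card ι * M) := by
  refine ⟨sum_nonneg fun i _ => mul_nonneg (hα i).1 (hw i).1, ?_⟩
  calc ∑ i, α i * w i ≤ ∑ _i : ι, M :=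
        sum_le_sum fun i _ => (mul_le_of_le_one_right (hα i).1 (hw i).2).trans (hα i).2
    _ = Fintype.card ι * M := by simp

lemma volume_le_of_forall_sub_le {S : Set ℝ} {L : ℝ}
    (h : ∀ a₁ ∈ S, ∀ a₂ ∈ S, a₁ ≤ a₂ → a₂ - a₁ ≤ L) : volume S ≤ ENNReal.ofReal L := by
  refine (Real.volume_le_diam S).trans (Metric.ediam_le fun a₁ h₁ a₂ h₂ => ?_)
  rw [edist_dist, Real.dist_eq]
  refine ENNReal.ofReal_le_ofReal ?_
  rcases le_total a₁ a₂ with h12 | h21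
  · rw [abs_sub_comm, abs_of_nonneg (sub_nonneg.2 h12)]; exact h a₁ h₁ a₂ h₂ h12
  · rw [abs_of_nonneg (sub_nonneg.2 h21)]; exact h a₂ h₂ a₁ h₁ h21

lemma volume_biUnion_le_card_mul {ι : Type*} (s : Finset ι) (S : ι → Set ℝ) {L : ℝ}
    (h : ∀ i ∈ s, volume (S i) ≤ ENNReal.ofReal L) :
    volume (⋃ i ∈ s, S i) ≤ ENNReal.ofReal (#s * L) := by
  calc volume (⋃ i ∈ s, S i) ≤ ∑ i ∈ s, volume (S i) := measure_biUnion_finset_le s S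
    _ ≤ ∑ _i ∈ s, ENNReal.ofReal L := sum_le_sum h
    _ = ENNReal.ofReal (#s * L) := by
      rw [sum_const, nsmul_eq_mul, ENNReal.ofReal_mul (Nat.cast_nonneg _), ENNReal.ofReal_natCast]

section Leader

variable (V : Finset ℝ) (b : ℝ → ℝ) (ε : ℝ)

def IsApproxLeaderAt (a v : ℝ) : Prop := ∀ w ∈ V, b w + a * w ≤ b v + a * v + ε

def upSwitchSet (v : ℝ) : Set ℝ :=
  {a | IsApproxLeaderAt V b ε a v ∧ ∃ w ∈ V, v < w ∧ b v + a * v ≤ b w + a * w + (1 + ε)}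

def downSwitchSet (v : ℝ) : Set ℝ :=
  {a | IsApproxLeaderAt V b ε a v ∧ ∃ w ∈ V, w < v ∧ b v + a * v ≤ b w + a * w + (1 + ε)}

variable {V b ε}

lemma IsApproxLeaderAt.mul_sub_le {a₁ a₂ v w : ℝ} (h₂ : IsApproxLeaderAt V b ε a₂ v) (hw : w ∈ V)
    (h₁ : b v + a₁ * v ≤ b w + a₁ * w + (1 + ε)) : (a₂ - a₁) * (w - v) ≤ 1 + 2 * ε := by
  linarith [h₂ w hw]

variable {δ : ℝ}

lemma volume_upSwitchSet_le (hδ : 0 < δ) (hgap : ∀ v ∈ V, ∀ w ∈ V, v < w → δ ≤ w - v) {v : ℝ}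
    (hv : v ∈ V) : volume (upSwitchSet V b ε v) ≤ ENNReal.ofReal ((1 + 2 * ε) / δ) := by
  refine volume_le_of_forall_sub_le fun a₁ ⟨_, w, hw, hvw, hclose⟩ a₂ ⟨hlead, _⟩ h12 => ?_
  rw [le_div_iff₀ hδ]
  nlinarith [hlead.mul_sub_le hw hclose, hgap v hv w hw hvw]

lemma volume_downSwitchSet_le (hδ : 0 < δ) (hgap : ∀ v ∈ V, ∀ w ∈ V, v < w → δ ≤ w - v) {v : ℝ}
    (hv : v ∈ V) : volume (downSwitchSet V b ε v) ≤ ENNReal.ofReal ((1 + 2 * ε) / δ) := by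
  refine volume_le_of_forall_sub_le fun a₁ ⟨hlead, _⟩ a₂ ⟨_, w, hw, hwv, hclose⟩ h12 => ?_
  rw [le_div_iff₀ hδ]
  nlinarith [hlead.mul_sub_le hw hclose, hgap w hw v hv hwv]

lemma volume_leaderSwitch_le (hV : V.Nonempty) (hδ : 0 < δ) (hε : 0 ≤ ε)
    (hgap : ∀ v ∈ V, ∀ w ∈ V, v < w → δ ≤ w - v) :
    volume {a | ∃ v ∈ V, ∃ w ∈ V, v ≠ w ∧ IsApproxLeaderAt V b ε a v ∧
        b v + a * v ≤ b w + a * w + (1 + ε)} ≤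
      ENNReal.ofReal (2 * (#V - 1) * ((1 + 2 * ε) / δ)) := by
  have hsub : {a | ∃ v ∈ V, ∃ w ∈ V, v ≠ w ∧ IsApproxLeaderAt V b ε a v ∧
        b v + a * v ≤ b w + a * w + (1 + ε)} ⊆
      (⋃ v ∈ V.erase (V.max' hV), upSwitchSet V b ε v) ∪
        ⋃ v ∈ V.erase (V.min' hV), downSwitchSet V b ε v := by
    rintro a ⟨v, hv, w, hw, hvw, hlead, hclose⟩
    simp only [Set.mem_union, Set.mem_iUnion, mem_erase, exists_prop]
    rcases hvw.lt_or_gt with hlt | hgt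
    · exact .inl ⟨v, ⟨(hlt.trans_le (V.le_max' w hw)).ne, hv⟩, hlead, w, hw, hlt, hclose⟩
    · exact .inr ⟨v, ⟨((V.min'_le w hw).trans_lt hgt).ne', hv⟩, hlead, w, hw, hgt, hclose⟩
  have hcard : ∀ m ∈ V, (#(V.erase m) : ℝ) = #V - 1 := fun m hm => by
    rw [card_erase_of_mem hm, Nat.cast_sub (card_pos.2 hV), Nat.cast_one]
  have hup := volume_biUnion_le_card_mul (V.erase (V.max' hV)) (upSwitchSet V b ε)
    fun v hv => volume_upSwitchSet_le hδ hgap (mem_of_mem_erase hv)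
  have hdown := volume_biUnion_le_card_mul (V.erase (V.min' hV)) (downSwitchSet V b ε)
    fun v hv => volume_downSwitchSet_le hδ hgap (mem_of_mem_erase hv)
  rw [hcard _ (V.max'_mem hV)] at hup
  rw [hcard _ (V.min'_mem hV)] at hdown
  have hcard_pos : (0 : ℝ) ≤ #V - 1 := by
    rw [sub_nonneg, Nat.one_le_cast]; exact card_pos.2 hV
  calc _ ≤ _ := measure_mono hsub
    _ ≤ _ := measure_union_le _ _
    _ ≤ _ := add_le_add hup hdown
    _ = _ := by rw [← ENNReal.ofReal_add (by positivity) (by positivity)]; ring_nf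

end Leader

lemma exists_fiberwise_max {X β : Type*} [Fintype X] (g : X → β) (c : X → ℝ) :
    ∃ b : β → ℝ, ∀ x, c x ≤ b (g x) ∧ ∃ x', g x' = g x ∧ c x' = b (g x) := by
  classical
  refine ⟨fun v => if h : (univ.filter (g · = v)).Nonempty then (univ.filter (g · = v)).sup' h c
    else 0, fun x => ?_⟩
  have hx : (univ.filter (g · = g x)).Nonempty := ⟨x, by simp⟩
  obtain ⟨x', hx', hmax⟩ := exists_mem_eq_sup' hx c
  simp only [dif_pos hx]
  exact ⟨le_sup' c (by simp), x', (mem_filter.1 hx').2, hmax.symm⟩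

lemma volume_switch_of_approx_argmax_le {X : Type*} [Fintype X] [Nonempty X] {δ ε : ℝ}
    (hδ : 0 < δ) (hε : 0 ≤ ε) (g c c' : X → ℝ) (hgap : ∀ x x', g x ≠ g x' → δ ≤ |g x - g x'|)
    (hc : ∀ x, c x ≤ c' x) (hc' : ∀ x, c' x ≤ c x + 1) (xt xt' : ℝ → X)
    (hxt : ∀ a x, c x + a * g x ≤ c (xt a) + a * g (xt a) + ε)
    (hxt' : ∀ a x, c' x + a * g x ≤ c' (xt' a) + a * g (xt' a) + ε) :
    volume {a | g (xt a) ≠ g (xt' a)} ≤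
      ENNReal.ofReal (2 * (#(univ.image g) - 1) * ((1 + 2 * ε) / δ)) := by
  classical
  obtain ⟨b, hb⟩ := exists_fiberwise_max g c
  refine le_trans (measure_mono fun a ha => ?_) (volume_leaderSwitch_le (b := b)
    (univ_nonempty.image g) hδ hε fun v hv w hw hvw => ?_)
  · refine ⟨g (xt a), mem_image_of_mem g (mem_univ _), g (xt' a), mem_image_of_mem g (mem_univ _),
      ha, ?_, ?_⟩
    · intro w hw
      obtain ⟨x, -, rfl⟩ := mem_image.1 hw
      obtain ⟨x', hgx', hcx'⟩ := (hb x).2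
      have := hxt a x'
      rw [hgx', hcx'] at this
      linarith [(hb (xt a)).1]
    · obtain ⟨x, hgx, hcx⟩ := (hb (xt a)).2
      have := hxt' a x
      rw [hgx] at this
      linarith [hc x, hc' (xt' a), (hb (xt' a)).1]
  · obtain ⟨x, -, rfl⟩ := mem_image.1 hv
    obtain ⟨x', -, rfl⟩ := mem_image.1 hw
    have := hgap x' x hvw.ne'
    rwa [abs_of_pos (sub_pos.2 hvw)] at this

section FTPL

variable {X Y : Type*} (f : X → Y → ℝ) (y : ℕ → Y) {N : ℕ} (Γ : X → Fin N → ℝ) (T : ℕ) (ε : ℝ)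

def IsApproxFTPLTrajectory (α : Fin N → ℝ) (x : ℕ → X) : Prop :=
  ∀ t, 1 ≤ t → t ≤ T + 1 → ∀ x' : X,
    (∑ τ ∈ Icc 1 (t - 1), f (x t) (y τ)) + (∑ j, α j * Γ (x t) j) ≥
      (∑ τ ∈ Icc 1 (t - 1), f x' (y τ)) + (∑ j, α j * Γ x' j) - ε

def regret [Fintype X] [Nonempty X] (x : ℕ → X) : ℝ :=
  (univ.sup' univ_nonempty fun x' => ∑ t ∈ Icc 1 T, f x' (y t)) - ∑ t ∈ Icc 1 T, f (x t) (y t)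

variable {f y Γ T ε}

lemma IsApproxFTPLTrajectory.mono {α : Fin N → ℝ} {x : ℕ → X} {T' : ℕ}
    (h : IsApproxFTPLTrajectory f y Γ T ε α x) (hT' : T' ≤ T) :
    IsApproxFTPLTrajectory f y Γ T' ε α x :=
  fun t ht₁ ht₂ => h t ht₁ (by omega)

lemma IsApproxFTPLTrajectory.sum_add_le {α : Fin N → ℝ} {x : ℕ → X}
    (h : IsApproxFTPLTrajectory f y Γ T ε α x) (x' : X) :
    ∑ t ∈ Icc 1 T, f x' (y t) + ∑ j, α j * Γ x' j ≤
      ∑ t ∈ Icc 1 T, f (x (t + 1)) (y t) + ∑ j, α j * Γ (x 1) j + (T + 1) * ε := by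
  induction T generalizing x' with
  | zero => simpa [add_comm] using h 1 le_rfl le_rfl x'
  | succ T ih =>
    have hlast := h (T + 1 + 1) (by omega) le_rfl x'
    have hprev := ih (h.mono T.le_succ) (x (T + 1 + 1))
    simp only [Nat.add_sub_cancel, sum_Icc_succ_top (Nat.le_add_left 1 T)] at hlast hprev ⊢
    push_cast
    linarith

lemma IsApproxFTPLTrajectory.regret_le [Fintype X] [Nonempty X] {α : Fin N → ℝ} {x : ℕ → X}
    (h : IsApproxFTPLTrajectory f y Γ T ε α x) {M : ℝ} (hα : ∀ j, α j ∈ Set.Icc 0 M)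
    (hΓ : ∀ x j, Γ x j ∈ Set.Icc (0 : ℝ) 1) :
    regret f y T x ≤
      N * M + (T + 1) * ε + ∑ t ∈ Icc 1 T, (f (x (t + 1)) (y t) - f (x t) (y t)) := by
  have hsup : (univ.sup' univ_nonempty fun x' => ∑ t ∈ Icc 1 T, f x' (y t)) ≤
      N * M + (T + 1) * ε + ∑ t ∈ Icc 1 T, f (x (t + 1)) (y t) := by
    refine sup'_le _ _ fun x' _ => ?_
    have h₁ := sum_mul_mem_Icc hα (hΓ x')
    have h₂ := sum_mul_mem_Icc hα (hΓ (x 1))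
    simp only [Fintype.card_fin] at h₁ h₂
    linarith [h.sum_add_le x', h₁.1, h₂.2]
  rw [regret, sum_sub_distrib]
  linarith

lemma regret_le_horizon [Fintype X] [Nonempty X] (hf : ∀ x y, f x y ∈ Set.Icc (0 : ℝ) 1)
    (x : ℕ → X) : regret f y T x ≤ T := by
  have hsup : (univ.sup' univ_nonempty fun x' => ∑ t ∈ Icc 1 T, f x' (y t)) ≤ T :=
    sup'_le _ _ fun x' _ => (sum_le_card_nsmul _ _ 1 fun t _ => (hf x' (y t)).2).trans (by simp)
  have hnonneg : 0 ≤ ∑ t ∈ Icc 1 T, f (x t) (y t) := sum_nonneg fun t _ => (hf (x t) (y t)).1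
  rw [regret]
  linarith

end FTPL

noncomputable def uniformPerturbation (N : ℕ) (η : ℝ) : Measure (Fin N → ℝ) :=
  Measure.pi fun _ => ENNReal.ofReal η • volume.restrict (Set.Icc (0 : ℝ) (1 / η))

lemma isProbabilityMeasure_uniformPerturbation (N : ℕ) {η : ℝ} (hη : 0 < η) :
    IsProbabilityMeasure (uniformPerturbation N η) :=
  have := isProbabilityMeasure_smul_restrict_Icc hη
  inferInstanceAs (IsProbabilityMeasure (Measure.pi _))

lemma ae_mem_Icc_uniformPerturbation (N : ℕ) {η : ℝ} (hη : 0 < η) :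
    ∀ᵐ α ∂uniformPerturbation N η, ∀ j, α j ∈ Set.Icc 0 (1 / η) :=
  have := isProbabilityMeasure_smul_restrict_Icc hη
  (Filter.eventually_pi fun _ =>
    Measure.ae_smul_measure (ae_restrict_mem measurableSet_Icc) _).filter_mono Measure.ae_pi_le_pi

section Uniform

variable {X Y : Type*} [Fintype X] {f : X → Y → ℝ} {y : ℕ → Y} {N : ℕ}
  {Γ : X → Fin N → ℝ} {T : ℕ} {ε δ η : ℝ} {κ : ℕ} {xtraj : (Fin N → ℝ) → ℕ → X}

lemma measurableSet_setOf_trajectory (hmeas : ∀ t x, MeasurableSet {α | xtraj α t = x})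
    (P : X → X → Prop) (t s : ℕ) : MeasurableSet {α | P (xtraj α t) (xtraj α s)} :=
  measurableSet_setOfPred.2 <| measurable_comp_of_measurableSet_fiber
    (φ := fun α => (xtraj α t, xtraj α s))
    (fun p => by simpa only [Prod.ext_iff, Set.ofPred_and] using (hmeas t p.1).inter (hmeas s p.2))
    fun p => P p.1 p.2

lemma measure_column_switch_le [Nonempty X] (hf : ∀ x y, f x y ∈ Set.Icc (0 : ℝ) 1)
    (hδ : 0 < δ) (hε : 0 ≤ ε) (hη : 0 < η) (j : Fin N) (hcol : #(univ.image fun x => Γ x j) ≤ κ)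
    (hgap : ∀ x x', Γ x j ≠ Γ x' j → δ ≤ |Γ x j - Γ x' j|)
    (hmeas : ∀ t x, MeasurableSet {α | xtraj α t = x})
    (htraj : ∀ α, IsApproxFTPLTrajectory f y Γ T ε α (xtraj α)) {t : ℕ} (ht : 1 ≤ t)
    (htT : t ≤ T) :
    uniformPerturbation N η {α | Γ (xtraj α t) j ≠ Γ (xtraj α (t + 1)) j} ≤
      ENNReal.ofReal (η * (2 * (κ - 1) * ((1 + 2 * ε) / δ))) := by
  classical
  obtain ⟨u, rfl⟩ : ∃ u, t = u + 1 := ⟨t - 1, by omega⟩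
  have := isProbabilityMeasure_smul_restrict_Icc hη
  refine pi_apply_le_of_update_preimage_le _ j
    (measurableSet_setOf_trajectory hmeas (fun x x' => Γ x j ≠ Γ x' j) _ _) fun g => ?_
  set c : X → ℝ := fun x => ∑ τ ∈ Icc 1 u, f x (y τ) + ∑ i ∈ univ.erase j, g i * Γ x i
  have hvol := volume_switch_of_approx_argmax_le hδ hε (Γ · j) c (fun x => c x + f x (y (u + 1)))
    hgap
    (fun x => by linarith [(hf x (y (u + 1))).1]) (fun x => by linarith [(hf x (y (u + 1))).2])
    (fun a => xtraj (Function.update g j a) (u + 1))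
    (fun a => xtraj (Function.update g j a) (u + 1 + 1))
    (fun a x => by
      have := htraj (Function.update g j a) (u + 1) (by omega) (by omega) x
      simp only [Nat.add_sub_cancel, sum_update_mul_eq] at this
      linarith)
    (fun a x => by
      have := htraj (Function.update g j a) (u + 1 + 1) (by omega) (by omega) x
      simp only [Nat.add_sub_cancel, sum_update_mul_eq,
        sum_Icc_succ_top (Nat.le_add_left 1 u)] at this
      linarith)
  have hcard : (#(univ.image fun x => Γ x j) : ℝ) ≤ κ := by exact_mod_cast hcol
  rw [ENNReal.ofReal_mul hη.le, Measure.smul_apply, smul_eq_mul]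
  gcongr
  refine (Measure.restrict_apply_le _ _).trans (hvol.trans (ENNReal.ofReal_le_ofReal ?_))
  gcongr

lemma measure_switch_le [Nonempty X] (hf : ∀ x y, f x y ∈ Set.Icc (0 : ℝ) 1) (hδ : 0 < δ)
    (hε : 0 ≤ ε) (hη : 0 < η) (hrows : ∀ x x' : X, x ≠ x' → ∃ j, Γ x j ≠ Γ x' j)
    (hcol : ∀ j, #(univ.image fun x => Γ x j) ≤ κ)
    (hgap : ∀ j x x', Γ x j ≠ Γ x' j → δ ≤ |Γ x j - Γ x' j|)
    (hmeas : ∀ t x, MeasurableSet {α | xtraj α t = x})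
    (htraj : ∀ α, IsApproxFTPLTrajectory f y Γ T ε α (xtraj α)) {t : ℕ} (ht : 1 ≤ t)
    (htT : t ≤ T) :
    uniformPerturbation N η {α | xtraj α t ≠ xtraj α (t + 1)} ≤
      ENNReal.ofReal (N * (η * (2 * (κ - 1) * ((1 + 2 * ε) / δ)))) :=
  calc _ ≤ uniformPerturbation N η (⋃ j, {α | Γ (xtraj α t) j ≠ Γ (xtraj α (t + 1)) j}) :=
        measure_mono fun α hα => Set.mem_iUnion.2 (hrows _ _ hα)
    _ ≤ ∑ j, uniformPerturbation N η {α | Γ (xtraj α t) j ≠ Γ (xtraj α (t + 1)) j} :=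
        measure_iUnion_fintype_le _ _
    _ ≤ ∑ _j : Fin N, ENNReal.ofReal (η * (2 * (κ - 1) * ((1 + 2 * ε) / δ))) :=
        sum_le_sum fun j _ => measure_column_switch_le hf hδ hε hη j (hcol j) (hgap j) hmeas htraj
          ht htT
    _ = _ := by
      rw [sum_const, card_univ, Fintype.card_fin, nsmul_eq_mul, ← ENNReal.ofReal_natCast,
        ← ENNReal.ofReal_mul (Nat.cast_nonneg _)]

lemma integral_sub_step_le [Nonempty X] (hf : ∀ x y, f x y ∈ Set.Icc (0 : ℝ) 1) (hκ : 1 ≤ κ)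
    (hδ : 0 < δ) (hε : 0 ≤ ε) (hη : 0 < η) (hrows : ∀ x x' : X, x ≠ x' → ∃ j, Γ x j ≠ Γ x' j)
    (hcol : ∀ j, #(univ.image fun x => Γ x j) ≤ κ)
    (hgap : ∀ j x x', Γ x j ≠ Γ x' j → δ ≤ |Γ x j - Γ x' j|)
    (hmeas : ∀ t x, MeasurableSet {α | xtraj α t = x})
    (htraj : ∀ α, IsApproxFTPLTrajectory f y Γ T ε α (xtraj α)) {t : ℕ} (ht : 1 ≤ t)
    (htT : t ≤ T) :
    ∫ α, (f (xtraj α (t + 1)) (y t) - f (xtraj α t) (y t)) ∂uniformPerturbation N η ≤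
      N * (η * (2 * (κ - 1) * ((1 + 2 * ε) / δ))) := by
  have := isProbabilityMeasure_uniformPerturbation N hη
  have hE := measurableSet_setOf_trajectory hmeas (· ≠ ·) t (t + 1)
  have hκ' : (1 : ℝ) ≤ κ := by exact_mod_cast hκ
  calc _ ≤ ∫ α, {α | xtraj α t ≠ xtraj α (t + 1)}.indicator 1 α ∂uniformPerturbation N η := by
        refine integral_mono
          ((integrable_comp_of_measurableSet_fiber (hmeas (t + 1)) (f · (y t))).sub
            (integrable_comp_of_measurableSet_fiber (hmeas t) (f · (y t))))
          ((integrable_const 1).indicator hE) fun α => ?_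
        by_cases hα : xtraj α t = xtraj α (t + 1)
        · simp [hα]
        · rw [Set.indicator_of_mem hα, Pi.one_apply]
          linarith [(hf (xtraj α (t + 1)) (y t)).2, (hf (xtraj α t) (y t)).1]
    _ = (uniformPerturbation N η).real {α | xtraj α t ≠ xtraj α (t + 1)} :=
        integral_indicator_one hE
    _ ≤ _ := ENNReal.toReal_le_of_le_ofReal (by positivity)
        (measure_switch_le hf hδ hε hη hrows hcol hgap hmeas htraj ht htT)

lemma integrable_regret [Nonempty X] {μ : Measure (Fin N → ℝ)} [IsFiniteMeasure μ]
    (hmeas : ∀ t x, MeasurableSet {α | xtraj α t = x}) :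
    Integrable (fun α => regret f y T (xtraj α)) μ :=
  (integrable_const _).sub <| integrable_finsetSum _ fun t _ =>
    integrable_comp_of_measurableSet_fiber (hmeas t) (f · (y t))

lemma integral_regret_le [Nonempty X] (hf : ∀ x y, f x y ∈ Set.Icc (0 : ℝ) 1)
    (hΓ : ∀ x j, Γ x j ∈ Set.Icc (0 : ℝ) 1) (hκ : 1 ≤ κ) (hδ : 0 < δ) (hε : 0 ≤ ε) (hη : 0 < η)
    (hrows : ∀ x x' : X, x ≠ x' → ∃ j, Γ x j ≠ Γ x' j)
    (hcol : ∀ j, #(univ.image fun x => Γ x j) ≤ κ)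
    (hgap : ∀ j x x', Γ x j ≠ Γ x' j → δ ≤ |Γ x j - Γ x' j|)
    (hmeas : ∀ t x, MeasurableSet {α | xtraj α t = x})
    (htraj : ∀ α, IsApproxFTPLTrajectory f y Γ T ε α (xtraj α)) :
    ∫ α, regret f y T (xtraj α) ∂uniformPerturbation N η ≤
      N * (1 / η) + (T + 1) * ε + T * (N * (η * (2 * (κ - 1) * ((1 + 2 * ε) / δ)))) := by
  have := isProbabilityMeasure_uniformPerturbation N hη
  have hstep : ∀ t, Integrable (fun α => f (xtraj α (t + 1)) (y t) - f (xtraj α t) (y t))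
      (uniformPerturbation N η) := fun t =>
    (integrable_comp_of_measurableSet_fiber (hmeas (t + 1)) (f · (y t))).sub
      (integrable_comp_of_measurableSet_fiber (hmeas t) (f · (y t)))
  calc _ ≤ ∫ α, (N * (1 / η) + (T + 1) * ε +
          ∑ t ∈ Icc 1 T, (f (xtraj α (t + 1)) (y t) - f (xtraj α t) (y t)))
          ∂uniformPerturbation N η :=
        integral_mono_ae (integrable_regret hmeas)
          ((integrable_const _).add (integrable_finsetSum _ fun t _ => hstep t))
          ((ae_mem_Icc_uniformPerturbation N hη).mono fun α hα => (htraj α).regret_le hα hΓ)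
    _ = N * (1 / η) + (T + 1) * ε + ∑ t ∈ Icc 1 T,
          ∫ α, (f (xtraj α (t + 1)) (y t) - f (xtraj α t) (y t)) ∂uniformPerturbation N η := by
        rw [integral_add (integrable_const _) (integrable_finsetSum _ fun t _ => hstep t),
          integral_finsetSum _ fun t _ => hstep t, integral_const, probReal_univ, one_smul]
    _ ≤ N * (1 / η) + (T + 1) * ε +
          ∑ _t ∈ Icc 1 T, N * (η * (2 * (κ - 1) * ((1 + 2 * ε) / δ))) := by
        gcongr with t ht
        exact integral_sub_step_le hf hκ hδ hε hη hrows hcol hgap hmeas htraj (mem_Icc.1 ht).1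
          (mem_Icc.1 ht).2
    _ = _ := by simp

end Uniform

lemma min_le_ftpl_bound {T N κ δ ε η s : ℝ} (hT : 0 ≤ T) (hN : 1 ≤ N) (hκ : 1 ≤ κ)
    (hδ0 : 0 < δ) (hδ1 : δ ≤ 1) (hε : 0 ≤ ε) (hs : 0 < s) (hηs : η * s = 1)
    (hs2 : s ^ 2 * δ = (1 + 2 * ε) * T * κ) :
    min T (N * s + (T + 1) * ε + T * (N * (η * (2 * (κ - 1) * ((1 + 2 * ε) / δ))))) ≤
      3 * N * s + ε * T := by
  have hstab : T * (N * (η * (2 * (κ - 1) * ((1 + 2 * ε) / δ)))) = 2 * N * s - 2 * N * s / κ := by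
    have hη : η = 1 / s := eq_one_div_of_mul_eq_one_left hηs
    subst hη
    field_simp
    linear_combination (1 - κ) * hs2
  rcases le_or_gt (ε * κ) (2 * N * s) with hsmall | hlarge
  · have : ε ≤ 2 * N * s / κ := by rw [le_div_iff₀ (by linarith)]; linarith
    exact (min_le_right _ _).trans (by linarith)
  · -- then `4 N T ≤ s`, so the trivial bound `T` wins
    have : 4 * N * s * T ≤ s ^ 2 := by nlinarith
    have : 4 * N * T ≤ s := by nlinarith
    exact (min_le_left _ _).trans (by nlinarith)

/-- **Regret bound of Generalized FTPL with uniform perturbations.**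
If `Γ` is `(κ,δ)`-admissible, `η = √(δ/((1+2ε)Tκ))`, and the coordinates of `α` are
i.i.d. uniform on `[0, 1/η]`, then for any family of ε-approximate Generalized-FTPL
trajectories `xtraj`:
`E[ max_x Σ_t f(x,y_t) − Σ_t f(x_t(α),y_t) ] ≤ 3N√((1+2ε)Tκ/δ) + εT`. -/
theorem ftpl_uniform_regret
    {X Y : Type*} [Fintype X] [Nonempty X]
    (f : X → Y → ℝ) (hf : ∀ x y, f x y ∈ Set.Icc (0:ℝ) 1)
    (T : ℕ) (hT : 1 ≤ T) (y : ℕ → Y)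
    (N : ℕ) (hN : 1 ≤ N)
    (Γ : X → Fin N → ℝ) (hΓ : ∀ x j, Γ x j ∈ Set.Icc (0:ℝ) 1)
    (κ : ℕ) (hκ : 1 ≤ κ) (δ : ℝ) (hδ0 : 0 < δ) (hδ1 : δ ≤ 1)
    -- (κ,δ)-admissibility:
    (hrows : ∀ x x' : X, x ≠ x' → ∃ j, Γ x j ≠ Γ x' j)
    (hcol : ∀ j : Fin N, (Finset.univ.image fun x => Γ x j).card ≤ κ)
    (hgap : ∀ (j : Fin N) (x x' : X), Γ x j ≠ Γ x' j → δ ≤ |Γ x j - Γ x' j|)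
    (ε : ℝ) (hε : 0 ≤ ε)
    (η : ℝ) (hη : η = Real.sqrt (δ / ((1 + 2*ε) * T * κ)))
    (D : Measure ℝ)
    (hD : D = ENNReal.ofReal η • volume.restrict (Set.Icc (0:ℝ) (1/η)))
    (xtraj : (Fin N → ℝ) → ℕ → X)
    (hmeas : ∀ (t : ℕ) (x₀ : X), MeasurableSet {α : Fin N → ℝ | xtraj α t = x₀})
    (htraj : ∀ (α : Fin N → ℝ) (t : ℕ), 1 ≤ t → t ≤ T + 1 → ∀ x' : X,
      (∑ τ ∈ Finset.Icc 1 (t-1), f (xtraj α t) (y τ)) + (∑ j, α j * Γ (xtraj α t) j) ≥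
      (∑ τ ∈ Finset.Icc 1 (t-1), f x' (y τ)) + (∑ j, α j * Γ x' j) - ε) :
    ∫ α, ((Finset.univ.sup' Finset.univ_nonempty fun x => ∑ t ∈ Finset.Icc 1 T, f x (y t)) -
          ∑ t ∈ Finset.Icc 1 T, f (xtraj α t) (y t))
        ∂(Measure.pi fun _ : Fin N => D) ≤
      3 * N * Real.sqrt ((1 + 2*ε) * T * κ / δ) + ε * T := by
  have hκ' : (1 : ℝ) ≤ κ := by exact_mod_cast hκ
  have hpos : 0 < (1 + 2 * ε) * T * κ / δ := by positivity
  set s := √((1 + 2 * ε) * T * κ / δ)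
  have hs : 0 < s := Real.sqrt_pos.2 hpos
  have hηs : η * s = 1 := by
    rw [hη, ← Real.sqrt_mul (by positivity), div_mul_div_comm, mul_comm δ,
      div_self (by positivity), Real.sqrt_one]
  have hη0 : 0 < η := pos_of_mul_pos_left (hηs ▸ one_pos) hs.le
  subst hD
  have := isProbabilityMeasure_uniformPerturbation N hη0
  have hmain := integral_regret_le hf hΓ hκ hδ0 hε hη0 hrows hcol hgap hmeas htraj
  rw [← eq_one_div_of_mul_eq_one_right hηs] at hmain
  have hhorizon : ∫ α, regret f y T (xtraj α) ∂uniformPerturbation N η ≤ T :=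
    (integral_mono (integrable_regret hmeas) (integrable_const _)
      fun α => regret_le_horizon hf (xtraj α)).trans_eq (by simp)
  calc _ ≤ min (T : ℝ) _ := le_min hhorizon hmain
    _ ≤ _ := min_le_ftpl_bound (Nat.cast_nonneg T) (by exact_mod_cast hN) hκ' hδ0 hδ1 hε hs hηs
        (by rw [Real.sq_sqrt hpos.le]; field_simp)
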